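/- (Proposition 3.2, bounds on the auxiliary variable g.) Fix Ū > 0, d > 0, k > 0, γ > 1, X̄ > 0, N_t, N_x ∈ ℕ, Δt > 0 with Δt < 1/(Ū + d + k Ū^γ), and a grid x_j = j Δx for j = 0,…,N_x with x_{N_x} = X̄. Let ρ : [0,∞) → [0,∞) be convex and strictly increasing. Suppose g_{i,j} : (0,∞) → ℝ (for i = 0,…,N_t and j = 0,…,N_x) and θ̂_{i,j} ∈ [0, Ū] satisfy: g_{N_t, j}(w) = ρ(w x_j) for all j and w > 0; g_{i,0}(w) = ρ(0) for all i and w > 0; and for 0 ≤ i < N_t and 1 ≤ j ≤ N_x, g_{i,j}(w) = g_{i+1,j}(w) + Δt [ θ̂_{i,j} (g_{i+1,j-1}(w) - g_{i+1,j}(w)) + (d + k θ̂_{i,j}^γ)(g_{i+1,0}(w) - g_{i+1,j}(w)) ]. Then for all i, j, and w > 0, ρ(0) ≤ g_{i,j}(w) ≤ ρ(w X̄). -/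

import Mathlib

open Real Set

/-!
The scheme is monotone: under the time-step restriction, each step writes `g i j w` as a convex
combination of `g (i+1) j w`, `g (i+1) (j-1) w` and `g (i+1) 0 w`. Hence any interval containing
the values at time `i + 1` contains those at time `i`, and backward induction from the terminal
data `ρ (w * x j)`, which lies in `[ρ 0, ρ (w * Xbar)]` by monotonicity of `ρ`, gives the bounds.
-/

/-- The left-hand side is a convex combination of `a`, `b` and `c`. -/
theorem explicit_step_mem_Icc {lo hi a b c p q Δt : ℝ} (hΔt : 0 ≤ Δt) (hp : 0 ≤ p) (hq : 0 ≤ q)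
    (hcfl : Δt * (p + q) ≤ 1) (ha : a ∈ Icc lo hi) (hb : b ∈ Icc lo hi) (hc : c ∈ Icc lo hi) :
    a + Δt * (p * (b - a) + q * (c - a)) ∈ Icc lo hi := by
  have hwa : 0 ≤ 1 - Δt * p - Δt * q := by linarith
  have hwb : 0 ≤ Δt * p := mul_nonneg hΔt hp
  have hwc : 0 ≤ Δt * q := mul_nonneg hΔt hq
  have hsplit : a + Δt * (p * (b - a) + q * (c - a)) =
      (1 - Δt * p - Δt * q) * a + Δt * p * b + Δt * q * c := by ring
  rw [hsplit]
  constructor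
  · linarith [mul_le_mul_of_nonneg_left ha.1 hwa, mul_le_mul_of_nonneg_left hb.1 hwb,
      mul_le_mul_of_nonneg_left hc.1 hwc]
  · linarith [mul_le_mul_of_nonneg_left ha.2 hwa, mul_le_mul_of_nonneg_left hb.2 hwb,
      mul_le_mul_of_nonneg_left hc.2 hwc]

theorem mul_rate_le_one_of_lt_one_div {Ubar d k γ Δt θ : ℝ} (hk : 0 ≤ k) (hγ : 0 ≤ γ)
    (hΔt : 0 < Δt) (hΔt' : Δt < 1 / (Ubar + d + k * Ubar ^ γ)) (hθ : θ ∈ Icc 0 Ubar) :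
    Δt * (θ + (d + k * θ ^ γ)) ≤ 1 := by
  have hS : 0 < Ubar + d + k * Ubar ^ γ := one_div_pos.mp (hΔt.trans hΔt')
  have hθγ : θ ^ γ ≤ Ubar ^ γ := rpow_le_rpow hθ.1 hθ.2 hγ
  have hrate : θ + (d + k * θ ^ γ) ≤ Ubar + d + k * Ubar ^ γ := by
    linarith [hθ.2, mul_le_mul_of_nonneg_left hθγ hk]
  calc Δt * (θ + (d + k * θ ^ γ)) ≤ Δt * (Ubar + d + k * Ubar ^ γ) :=
        mul_le_mul_of_nonneg_left hrate hΔt.le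
    _ ≤ 1 := ((lt_div_iff₀ hS).mp hΔt').le

theorem discrete_g_bounds_general
    (Ubar d k γ Xbar Δt Δx : ℝ) (Nt Nx : ℕ)
    (hd : 0 < d) (hk : 0 < k) (hγ : 1 < γ)
    (hΔt : 0 < Δt) (hΔt' : Δt < 1 / (Ubar + d + k * Ubar ^ γ))
    (hΔx : 0 < Δx)
    (x : ℕ → ℝ) (hx : ∀ j : ℕ, x j = (j : ℝ) * Δx) (hxN : x Nx = Xbar)
    (ρ : ℝ → ℝ)
    (hρmono : StrictMonoOn ρ (Ici 0))
    (g : ℕ → ℕ → ℝ → ℝ) (θ : ℕ → ℕ → ℝ)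
    (hθ : ∀ i j : ℕ, θ i j ∈ Icc 0 Ubar)
    (hterm : ∀ j : ℕ, ∀ w : ℝ, 0 < w → g Nt j w = ρ (w * x j))
    (hbdry : ∀ i : ℕ, ∀ w : ℝ, 0 < w → g i 0 w = ρ 0)
    (hrec : ∀ i j : ℕ, ∀ w : ℝ, i < Nt → 1 ≤ j → j ≤ Nx → 0 < w →
      g i j w = g (i+1) j w + Δt *
        (θ i j * (g (i+1) (j-1) w - g (i+1) j w)
          + (d + k * θ i j ^ γ) * (g (i+1) 0 w - g (i+1) j w))) :
    ∀ i j : ℕ, ∀ w : ℝ, i ≤ Nt → j ≤ Nx → 0 < w →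
      ρ 0 ≤ g i j w ∧ g i j w ≤ ρ (w * Xbar) := by
  intro i j w hi hj hw
  have hX : 0 ≤ Xbar := hxN ▸ hx Nx ▸ by positivity
  have hρ : MapsTo ρ (Icc 0 (w * Xbar)) (Icc (ρ 0) (ρ (w * Xbar))) :=
    (hρmono.monotoneOn.mono Icc_subset_Ici_self).mapsTo_Icc
  have hx_mem : ∀ j ≤ Nx, w * x j ∈ Icc 0 (w * Xbar) := fun j hj => by
    rw [← hxN, hx, hx]
    exact ⟨by positivity, by gcongr⟩
  suffices ∀ j ≤ Nx, g i j w ∈ Icc (ρ 0) (ρ (w * Xbar)) from this j hj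
  induction hi using Nat.decreasingInduction with
  | self => exact fun j hj => hterm j w hw ▸ hρ (hx_mem j hj)
  | of_succ i hi ih =>
    intro j hj
    rcases Nat.eq_zero_or_pos j with rfl | hj1
    · rw [hbdry i w hw]
      exact hρ (left_mem_Icc.mpr (by positivity))
    · rw [hrec i j w hi hj1 hj hw]
      exact explicit_step_mem_Icc hΔt.le (hθ i j).1
        (add_nonneg hd.le (mul_nonneg hk.le (rpow_nonneg (hθ i j).1 γ)))
        (mul_rate_le_one_of_lt_one_div hk.le (by linarith) hΔt hΔt' (hθ i j))
        (ih j hj) (ih (j - 1) (by omega)) (ih 0 (Nat.zero_le _))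

/-- Proposition 3.2, bounds on the auxiliary variable g of the explicit finite
difference scheme: under the time-step restriction Δt < 1/(Ū + d + k Ū^γ), the
numerical solutions g remain between ρ(0) and ρ(w X̄). -/
theorem discrete_g_bounds
    (Ubar d k γ Xbar Δt Δx : ℝ) (Nt Nx : ℕ)
    (hU : 0 < Ubar) (hd : 0 < d) (hk : 0 < k) (hγ : 1 < γ) (hX : 0 < Xbar)
    (hΔt : 0 < Δt) (hΔt' : Δt < 1 / (Ubar + d + k * Ubar ^ γ))
    (hΔx : 0 < Δx)
    (x : ℕ → ℝ) (hx : ∀ j : ℕ, x j = (j : ℝ) * Δx) (hxN : x Nx = Xbar)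
    (ρ : ℝ → ℝ)
    (hρconv : ConvexOn ℝ (Ici 0) ρ)
    (hρmono : StrictMonoOn ρ (Ici 0))
    (hρnn : ∀ y : ℝ, 0 ≤ y → 0 ≤ ρ y)
    (g : ℕ → ℕ → ℝ → ℝ) (θ : ℕ → ℕ → ℝ)
    (hθ : ∀ i j : ℕ, θ i j ∈ Icc 0 Ubar)
    (hterm : ∀ j : ℕ, ∀ w : ℝ, 0 < w → g Nt j w = ρ (w * x j))
    (hbdry : ∀ i : ℕ, ∀ w : ℝ, 0 < w → g i 0 w = ρ 0)
    (hrec : ∀ i j : ℕ, ∀ w : ℝ, i < Nt → 1 ≤ j → j ≤ Nx → 0 < w →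
      g i j w = g (i+1) j w + Δt *
        (θ i j * (g (i+1) (j-1) w - g (i+1) j w)
          + (d + k * θ i j ^ γ) * (g (i+1) 0 w - g (i+1) j w))) :
    ∀ i j : ℕ, ∀ w : ℝ, i ≤ Nt → j ≤ Nx → 0 < w →
      ρ 0 ≤ g i j w ∧ g i j w ≤ ρ (w * Xbar) :=
  discrete_g_bounds_general Ubar d k γ Xbar Δt Δx Nt Nx hd hk hγ hΔt hΔt' hΔx x hx hxN ρ hρmono g θ
    hθ hterm hbdry hrec
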